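/- HTD-DAG is the minimal correction from above: ȳ produced by HTD-DAG is the (pointwise) largest vector z : V → [0,1] such that z ≤ ŷ pointwise and z satisfies the true path rule (i ∈ par(j) → z_i ≥ z_j). -/

import Mathlib

/-!
Along a path `j → ⋯ → i` the true path rule gives `z i ≤ z j ≤ ŷ j`, so every admissible `z`
lies below the infimum of `ŷ` over the ancestors of `i`; that infimum is itself admissible,
since the ancestors of a parent are ancestors of the child.
-/

open Relation

noncomputable def ancestorInf {α β : Type*} [InfSet β] (E : α → α → Prop) (f : α → β) (i : α) : β :=
  sInf (f '' {j | ReflTransGen E j i})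

section ancestorInf

variable {α β : Type*} (E : α → α → Prop)

theorem le_of_reflTransGen_of_edge_le [Preorder β] {z : α → β} (hz : ∀ i j, E i j → z j ≤ z i)
    {i j : α} (hij : ReflTransGen E i j) : z j ≤ z i := by
  have h := hij.lift z (r := E) (p := (· ≥ ·)) hz
  rwa [reflTransGen_eq_self] at h

variable [ConditionallyCompleteLattice β] {f : α → β}

theorem ancestorInf_le_self (hf : BddBelow (Set.range f)) (i : α) : ancestorInf E f i ≤ f i :=
  csInf_le (hf.mono (Set.image_subset_range _ _)) ⟨i, .refl, rfl⟩

theorem le_ancestorInf {b : β} (i : α) (hb : ∀ j, ReflTransGen E j i → b ≤ f j) :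
    b ≤ ancestorInf E f i :=
  le_csInf ⟨f i, i, .refl, rfl⟩ (by rintro _ ⟨j, hj, rfl⟩; exact hb j hj)

theorem ancestorInf_le_of_edge (hf : BddBelow (Set.range f)) {i j : α} (hij : E i j) :
    ancestorInf E f j ≤ ancestorInf E f i :=
  le_ancestorInf E i fun k hki =>
    csInf_le (hf.mono (Set.image_subset_range _ _)) ⟨k, hki.tail hij, rfl⟩

theorem le_ancestorInf_of_edge_le {z : α → β} (hzf : ∀ i, z i ≤ f i)
    (hz : ∀ i j, E i j → z j ≤ z i) (i : α) : z i ≤ ancestorInf E f i :=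
  le_ancestorInf E i fun j hji => (le_of_reflTransGen_of_edge_le E hz hji).trans (hzf j)

end ancestorInf

theorem HTD_DAG_is_largest_minorant_general
    {V : Type*} (E : V → V → Prop)
    (yhat : V → ℝ) (hy : ∀ i, yhat i ∈ Set.Icc (0:ℝ) 1)
    (ybar : V → ℝ)
    (hbar : ∀ i, ybar i = sInf (yhat '' {j | Relation.ReflTransGen E j i})) :
    (∀ i, ybar i ∈ Set.Icc (0:ℝ) 1) ∧
    (∀ i, ybar i ≤ yhat i) ∧
    (∀ i j, E i j → ybar i ≥ ybar j) ∧
    (∀ z : V → ℝ, (∀ i, z i ∈ Set.Icc (0:ℝ) 1) → (∀ i, z i ≤ yhat i) →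
      (∀ i j, E i j → z i ≥ z j) → ∀ i, z i ≤ ybar i) := by
  obtain rfl : ybar = ancestorInf E yhat := funext hbar
  have hbdd : BddBelow (Set.range yhat) := ⟨0, by rintro _ ⟨j, rfl⟩; exact (hy j).1⟩
  have hle := ancestorInf_le_self E hbdd
  refine ⟨fun i => ⟨le_ancestorInf E i fun j _ => (hy j).1, (hle i).trans (hy i).2⟩, hle,
    fun _ _ hij => ancestorInf_le_of_edge E hbdd hij,
    fun z _ hzy hz => le_ancestorInf_of_edge_le E hzy hz⟩

/-- HTD-DAG is the minimal correction from above: the output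
`ȳ i = min_{j ∈ anc(i) ∪ {i}} ŷ j` is the pointwise largest vector
`z : V → [0,1]` such that `z ≤ ŷ` pointwise and `z` satisfies the true path
rule (`i ∈ par(j) → z i ≥ z j`). -/
theorem HTD_DAG_is_largest_minorant
    {V : Type*} [Fintype V] (E : V → V → Prop) (r : V)
    (hacyclic : ∀ v, ¬ Relation.TransGen E v v)
    (hreach : ∀ v, Relation.ReflTransGen E r v)
    (yhat : V → ℝ) (hy : ∀ i, yhat i ∈ Set.Icc (0:ℝ) 1)
    (ybar : V → ℝ)
    (hbar : ∀ i, ybar i = sInf (yhat '' {j | Relation.ReflTransGen E j i})) :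
    (∀ i, ybar i ∈ Set.Icc (0:ℝ) 1) ∧
    (∀ i, ybar i ≤ yhat i) ∧
    (∀ i j, E i j → ybar i ≥ ybar j) ∧
    (∀ z : V → ℝ, (∀ i, z i ∈ Set.Icc (0:ℝ) 1) → (∀ i, z i ≤ yhat i) →
      (∀ i j, E i j → z i ≥ z j) → ∀ i, z i ≤ ybar i) :=
  HTD_DAG_is_largest_minorant_general E yhat hy ybar hbar
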